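/- arXiv:2006.06994 — 4 statements merged into one kernel-verified Lean document; each statement's English description precedes it below -/
import Mathlib

section
/- Let δ>0, x₀∈ℂ, and let f be holomorphic on B_δ(x₀) with 0 < M ≤ |f(x)| ≤ L for all x ∈ B_δ(x₀). Let F : B_δ(x₀) → ℂ be an antiderivative of f (i.e. F' = f on B_δ(x₀)). Set α := M²/(2M+4L) and β := M/(2M+4L) (= α/M). Then there exists a unique function G : B_{αδ}(F(x₀)) → B_{βδ}(x₀) such that F(G(y)) = y for all y ∈ B_{αδ}(F(x₀)); moreover G is holomorphic on B_{αδ}(F(x₀)) and Lipschitz continuous with Lipschitz constant 1/M. -/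
/-!
Write `c = f x₀`. The Schwarz lemma gives `‖f z - c‖ ≤ (2L/δ)‖z - x₀‖`, so on the closed disc of
radius `r = 2βδ` the map `F` differs from `z ↦ c z` by a function that is Lipschitz with constant
`K = 2Lr/δ < M ≤ ‖c‖`, and from the affine map `z ↦ F x₀ + c (z - x₀)` by at most `Lr²/δ`.
Hence, for `y ∈ B_{αδ}(F x₀)`, the Newton-type map `z ↦ z - (F z - y)/c` is a contraction of that
disc, and `G y` is its fixed point. The same estimates make `F` injective on the disc and `G`
continuous, so `G` is holomorphic with `G' = 1/(f ∘ G)`; then `‖G'‖ ≤ 1/M` gives the Lipschitz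
bound, which in turn places `G y` in `B_{βδ}(x₀)`.
-/

open Set Metric

theorem hasDerivAt_of_rightInvOn {𝕜 : Type*} [NontriviallyNormedField 𝕜] {F f G : 𝕜 → 𝕜}
    {U V : Set 𝕜} {y : 𝕜} (hU : IsOpen U) (hG : ContinuousOn G U) (hGUV : MapsTo G U V)
    (hGF : RightInvOn G F U) (hF : ∀ x ∈ V, HasDerivAt F (f x) x) (hf : ∀ x ∈ V, f x ≠ 0)
    (hy : y ∈ U) : HasDerivAt G (f (G y))⁻¹ y :=
  HasDerivAt.of_local_left_inverse (hG.continuousAt (hU.mem_nhds hy)) (hF _ (hGUV hy))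
    (hf _ (hGUV hy)) (Filter.eventually_of_mem (hU.mem_nhds hy) hGF)

section

variable {f F : ℂ → ℂ} {s U : Set ℂ} {a b c x x₀ y z : ℂ} {C D K L M δ ε ρ r : ℝ}

theorem Complex.norm_sub_le_of_norm_le_on_ball (hf : DifferentiableOn ℂ f (ball x₀ δ))
    (hL : ∀ w ∈ ball x₀ δ, ‖f w‖ ≤ L)
    (hz : z ∈ ball x₀ δ) : ‖f z - f x₀‖ ≤ 2 * L / δ * ‖z - x₀‖ := by
  have hmaps : MapsTo f (ball x₀ δ) (closedBall (f x₀) (2 * L)) := fun w hw ↦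
    calc dist (f w) (f x₀) ≤ ‖f w‖ + ‖f x₀‖ := dist_le_norm_add_norm _ _
      _ ≤ 2 * L := by linarith [hL w hw, hL x₀ (mem_ball_self (nonempty_ball.mp ⟨z, hz⟩))]
  simpa only [dist_eq_norm] using Complex.dist_le_div_mul_dist_of_mapsTo_ball hf hmaps hz

theorem norm_sub_sub_mul_le_half_mul_sq (hs : Convex ℝ s) (hx₀ : x₀ ∈ s) (hx : x ∈ s)
    (hF : ∀ z ∈ s, HasDerivAt F (f z) z) (hf : ∀ z ∈ s, ‖f z - f x₀‖ ≤ D * ‖z - x₀‖) :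
    ‖F x - F x₀ - f x₀ * (x - x₀)‖ ≤ D / 2 * ‖x - x₀‖ ^ 2 := by
  set v := x - x₀
  set γ : ℝ → ℂ := fun t ↦ x₀ + t • v
  have hγs : ∀ t ∈ Icc (0 : ℝ) 1, γ t ∈ s := fun t ht ↦ hs.add_smul_sub_mem hx₀ hx ht
  have hγ : ∀ t, HasDerivAt (fun t : ℝ ↦ t • v) v t := fun t ↦ by
    simpa using (hasDerivAt_id t).smul_const v
  have hφ : ∀ t ∈ Icc (0 : ℝ) 1, HasDerivAt (fun t ↦ F (γ t) - F x₀ - f x₀ * (t • v))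
      ((f (γ t) - f x₀) * v) t := fun t ht ↦
    ((((hF _ (hγs t ht)).comp t ((hγ t).const_add x₀)).sub_const (F x₀)).sub
      ((hγ t).const_mul (f x₀))).congr_deriv (by ring)
  have hB : ∀ t, HasDerivAt (fun t ↦ D / 2 * ‖v‖ ^ 2 * t ^ 2) (D * ‖v‖ ^ 2 * t) t := fun t ↦
    ((hasDerivAt_pow 2 t).const_mul (D / 2 * ‖v‖ ^ 2)).congr_deriv (by norm_num; ring)
  -- fence `t ↦ F (x₀ + t v) - F x₀ - f x₀ t v` on `[0, 1]` by the parabola `t ↦ D/2 ‖v‖² t²`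
  have hbound := image_norm_le_of_norm_deriv_right_le_deriv_boundary
    (fun t ht ↦ (hφ t ht).continuousAt.continuousWithinAt)
    (fun t ht ↦ (hφ t (Ico_subset_Icc_self ht)).hasDerivWithinAt) (by simp [γ]) hB
    (fun t ht ↦ by
      have h := hf _ (hγs t (Ico_subset_Icc_self ht))
      simp only [γ, add_sub_cancel_left, norm_smul, Real.norm_of_nonneg ht.1] at h
      rw [norm_mul]
      calc ‖f (γ t) - f x₀‖ * ‖v‖ ≤ D * (t * ‖v‖) * ‖v‖ := by gcongr
        _ = D * ‖v‖ ^ 2 * t := by ring)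
    (right_mem_Icc.2 zero_le_one)
  simpa [γ, v] using hbound

theorem norm_sub_sub_mul_le_mul_norm (hs : Convex ℝ s) (hF : ∀ z ∈ s, HasDerivAt F (f z) z)
    (hf : ∀ z ∈ s, ‖f z - c‖ ≤ C) (ha : a ∈ s) (hb : b ∈ s) :
    ‖F b - F a - c * (b - a)‖ ≤ C * ‖b - a‖ := by
  have hH : ∀ z ∈ s, HasDerivWithinAt (fun z ↦ F z - c * z) (f z - c) s z := fun z hz ↦
    ((hF z hz).sub ((hasDerivAt_id z).const_mul c |>.congr_deriv (mul_one c))).hasDerivWithinAt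
  rw [show F b - F a - c * (b - a) = F b - c * b - (F a - c * a) by ring]
  exact hs.norm_image_sub_le_of_norm_hasDerivWithin_le hH hf ha hb

theorem sub_mul_norm_sub_le_norm_sub (h : ‖F b - F a - c * (b - a)‖ ≤ K * ‖b - a‖) :
    (‖c‖ - K) * ‖b - a‖ ≤ ‖F b - F a‖ := by
  have h' := norm_sub_le (F b - F a) (F b - F a - c * (b - a))
  rw [sub_sub_cancel, norm_mul] at h'
  rw [sub_mul]
  linarith

theorem injOn_of_norm_sub_sub_mul_le (hK : K < ‖c‖)
    (hF : ∀ a ∈ s, ∀ b ∈ s, ‖F b - F a - c * (b - a)‖ ≤ K * ‖b - a‖) : InjOn F s := by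
  intro a ha b hb hab
  have h := sub_mul_norm_sub_le_norm_sub (hF a ha b hb)
  rw [hab, sub_self, norm_zero] at h
  have : ‖b - a‖ = 0 := le_antisymm (nonpos_of_mul_nonpos_right h (sub_pos.2 hK)) (norm_nonneg _)
  exact (sub_eq_zero.1 (norm_eq_zero.1 this)).symm

theorem exists_mem_closedBall_eq_of_norm_sub_sub_mul_le (hr : 0 ≤ r) (hK₀ : 0 ≤ K) (hK : K < ‖c‖)
    (hF : ∀ a ∈ closedBall x₀ r, ∀ b ∈ closedBall x₀ r, ‖F b - F a - c * (b - a)‖ ≤ K * ‖b - a‖)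
    (hF₀ : ∀ x ∈ closedBall x₀ r, ‖F x - F x₀ - c * (x - x₀)‖ ≤ ε)
    (hy : ‖y - F x₀‖ + ε ≤ ‖c‖ * r) :
    ∃ x ∈ closedBall x₀ r, F x = y := by
  have hc : 0 < ‖c‖ := hK₀.trans_lt hK
  have hc₀ : c ≠ 0 := norm_pos_iff.1 hc
  set T : ℂ → ℂ := fun x ↦ x - (F x - y) / c
  have hT : ∀ x, T x - x₀ = ((y - F x₀) - (F x - F x₀ - c * (x - x₀))) / c := fun x ↦ by
    simp only [T]; field_simp; ring
  have hTS : MapsTo T (closedBall x₀ r) (closedBall x₀ r) := fun x hx ↦ by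
    rw [mem_closedBall, dist_eq_norm, hT, norm_div, div_le_iff₀ hc]
    linarith [norm_sub_le (y - F x₀) (F x - F x₀ - c * (x - x₀)), hF₀ x hx]
  have hTlip : LipschitzOnWith (K / ‖c‖).toNNReal T (closedBall x₀ r) := by
    refine LipschitzOnWith.of_dist_le' fun x hx x' hx' ↦ ?_
    have hTT : T x - T x' = -((F x - F x' - c * (x - x')) / c) := by
      simp only [T]; field_simp; ring
    rw [dist_eq_norm, dist_eq_norm, hTT, norm_neg, norm_div, div_mul_eq_mul_div,
      div_le_div_iff_of_pos_right hc]
    exact hF x' hx' x hx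
  have hTcontr : ContractingWith (K / ‖c‖).toNNReal (hTS.restrict T _ _) :=
    ⟨Real.toNNReal_lt_one.2 ((div_lt_one hc).2 hK), hTlip.mapsToRestrict hTS⟩
  obtain ⟨x, hx, hTx, -⟩ := hTcontr.exists_fixedPoint' isClosed_closedBall.isComplete hTS
    (mem_closedBall_self hr) (edist_ne_top _ _)
  refine ⟨x, hx, ?_⟩
  have : (F x - y) / c = 0 := sub_eq_self.1 hTx
  exact sub_eq_zero.1 ((div_eq_zero_iff.1 this).resolve_right hc₀)

theorem exists_lipschitzOnWith_rightInvOn (hr : 0 ≤ r) (hK₀ : 0 ≤ K) (hK : K < ‖c‖)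
    (hF : ∀ a ∈ closedBall x₀ r, ∀ b ∈ closedBall x₀ r, ‖F b - F a - c * (b - a)‖ ≤ K * ‖b - a‖)
    (hF₀ : ∀ x ∈ closedBall x₀ r, ‖F x - F x₀ - c * (x - x₀)‖ ≤ ε)
    (hU : ∀ y ∈ U, ‖y - F x₀‖ + ε ≤ ‖c‖ * r) :
    ∃ G : ℂ → ℂ, MapsTo G U (closedBall x₀ r) ∧ RightInvOn G F U ∧
      LipschitzOnWith (‖c‖ - K)⁻¹.toNNReal G U := by
  choose! G hGS hGF using fun y hy ↦
    exists_mem_closedBall_eq_of_norm_sub_sub_mul_le hr hK₀ hK hF hF₀ (hU y hy)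
  refine ⟨G, hGS, hGF, LipschitzOnWith.of_dist_le' fun y hy y' hy' ↦ ?_⟩
  have h := sub_mul_norm_sub_le_norm_sub (hF _ (hGS y' hy') _ (hGS y hy))
  rw [hGF y hy, hGF y' hy'] at h
  rw [dist_eq_norm, dist_eq_norm, inv_mul_eq_div, le_div_iff₀ (sub_pos.2 hK), mul_comm]
  exact h

theorem norm_sub_sub_mul_le_of_mem_closedBall (hf : DifferentiableOn ℂ f (ball x₀ δ))
    (hL : ∀ w ∈ ball x₀ δ, ‖f w‖ ≤ L) (hF : ∀ w ∈ ball x₀ δ, HasDerivAt F (f w) w) (hrδ : r < δ)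
    (ha : a ∈ closedBall x₀ r) (hb : b ∈ closedBall x₀ r) :
    ‖F b - F a - f x₀ * (b - a)‖ ≤ 2 * L / δ * r * ‖b - a‖ := by
  have hrs : closedBall x₀ r ⊆ ball x₀ δ := closedBall_subset_ball hrδ
  refine norm_sub_sub_mul_le_mul_norm (convex_closedBall x₀ r) (fun w hw ↦ hF w (hrs hw))
    (fun w hw ↦ ?_) ha hb
  have hL₀ : 0 ≤ L := (norm_nonneg _).trans (hL w (hrs hw))
  have hδ : 0 < δ := pos_of_mem_ball (hrs hw)
  exact (Complex.norm_sub_le_of_norm_le_on_ball hf hL (hrs hw)).trans <|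
    mul_le_mul_of_nonneg_left (mem_closedBall_iff_norm.1 hw) (by positivity)

theorem norm_sub_sub_mul_sub_le_of_mem_closedBall (hf : DifferentiableOn ℂ f (ball x₀ δ))
    (hL : ∀ w ∈ ball x₀ δ, ‖f w‖ ≤ L) (hF : ∀ w ∈ ball x₀ δ, HasDerivAt F (f w) w) (hrδ : r < δ)
    (hx : x ∈ closedBall x₀ r) : ‖F x - F x₀ - f x₀ * (x - x₀)‖ ≤ L / δ * r ^ 2 := by
  have hrs : closedBall x₀ r ⊆ ball x₀ δ := closedBall_subset_ball hrδ
  have hL₀ : 0 ≤ L := (norm_nonneg _).trans (hL x (hrs hx))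
  have hδ : 0 < δ := pos_of_mem_ball (hrs hx)
  calc ‖F x - F x₀ - f x₀ * (x - x₀)‖ ≤ 2 * L / δ / 2 * ‖x - x₀‖ ^ 2 :=
        norm_sub_sub_mul_le_half_mul_sq (convex_closedBall x₀ r)
          (mem_closedBall_self (dist_nonneg.trans (mem_closedBall.1 hx))) hx
          (fun w hw ↦ hF w (hrs hw))
          (fun w hw ↦ Complex.norm_sub_le_of_norm_le_on_ball hf hL (hrs hw))
    _ ≤ 2 * L / δ / 2 * r ^ 2 := by gcongr; exact mem_closedBall_iff_norm.1 hx
    _ = L / δ * r ^ 2 := by ring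

theorem exists_differentiableOn_lipschitzOnWith_rightInvOn (hM : 0 < M)
    (hf : DifferentiableOn ℂ f (ball x₀ δ)) (hbd : ∀ w ∈ ball x₀ δ, M ≤ ‖f w‖ ∧ ‖f w‖ ≤ L)
    (hF : ∀ w ∈ ball x₀ δ, HasDerivAt F (f w) w) (hr : 0 ≤ r) (hrδ : r < δ)
    (hK : 2 * L / δ * r < M) (hρ : ρ + L / δ * r ^ 2 ≤ M * r) :
    ∃ G : ℂ → ℂ, MapsTo G (ball (F x₀) ρ) (closedBall x₀ r) ∧ RightInvOn G F (ball (F x₀) ρ) ∧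
      DifferentiableOn ℂ G (ball (F x₀) ρ) ∧
      LipschitzOnWith (1 / M).toNNReal G (ball (F x₀) ρ) := by
  have hL : ∀ w ∈ ball x₀ δ, ‖f w‖ ≤ L := fun w hw ↦ (hbd w hw).2
  have hx₀ : x₀ ∈ ball x₀ δ := mem_ball_self (hr.trans_lt hrδ)
  have hL₀ : 0 ≤ L := (norm_nonneg _).trans (hL x₀ hx₀)
  have hδ : 0 < δ := pos_of_mem_ball hx₀
  have hM₀ : M ≤ ‖f x₀‖ := (hbd x₀ hx₀).1
  obtain ⟨G, hGS, hGF, hGlip⟩ := exists_lipschitzOnWith_rightInvOn (U := ball (F x₀) ρ) hr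
    (by positivity) (hK.trans_le hM₀)
    (fun a ha b hb ↦ norm_sub_sub_mul_le_of_mem_closedBall hf hL hF hrδ ha hb)
    (fun x hx ↦ norm_sub_sub_mul_sub_le_of_mem_closedBall hf hL hF hrδ hx)
    (fun y hy ↦ by nlinarith [mem_ball_iff_norm.1 hy, mul_le_mul_of_nonneg_right hM₀ hr])
  have hGd : ∀ y ∈ ball (F x₀) ρ, HasDerivAt G (f (G y))⁻¹ y := fun y hy ↦
    hasDerivAt_of_rightInvOn isOpen_ball hGlip.continuousOn
      (hGS.mono_right (closedBall_subset_ball hrδ)) hGF hF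
      (fun w hw ↦ norm_pos_iff.1 (hM.trans_le (hbd w hw).1)) hy
  refine ⟨G, hGS, hGF, fun y hy ↦ (hGd y hy).differentiableAt.differentiableWithinAt,
    (convex_ball _ _).lipschitzOnWith_of_nnnorm_hasDerivWithin_le
      (fun y hy ↦ (hGd y hy).hasDerivWithinAt) fun y hy ↦ ?_⟩
  rw [← NNReal.coe_le_coe, coe_nnnorm, Real.coe_toNNReal _ (by positivity), norm_inv, one_div]
  exact inv_anti₀ hM (hbd _ (closedBall_subset_ball hrδ (hGS hy))).1

end

/-- local inverse of an antiderivative, with explicit radii.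
Let `f` be holomorphic on `B_δ(x₀)` with `0 < M ≤ |f| ≤ L` there, and let `F` be an
antiderivative of `f` on `B_δ(x₀)`.  With `α := M²/(2M+4L)` and `β := M/(2M+4L)` there is a
unique `G : B_{αδ}(F(x₀)) → B_{βδ}(x₀)` with `F (G y) = y` on `B_{αδ}(F(x₀))`; moreover `G`
is holomorphic there and Lipschitz with constant `1/M`. -/
theorem stmt2 (δ M L : ℝ) (hδ : 0 < δ) (hM : 0 < M) (hML : M ≤ L) (x₀ : ℂ)
    (f F : ℂ → ℂ)
    (hf : DifferentiableOn ℂ f (Metric.ball x₀ δ))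
    (hbd : ∀ x ∈ Metric.ball x₀ δ, M ≤ ‖f x‖ ∧ ‖f x‖ ≤ L)
    (hF : ∀ x ∈ Metric.ball x₀ δ, HasDerivAt F (f x) x) :
    ∃ G : ℂ → ℂ,
      (Set.MapsTo G (Metric.ball (F x₀) (M ^ 2 / (2 * M + 4 * L) * δ))
          (Metric.ball x₀ (M / (2 * M + 4 * L) * δ)) ∧
        (∀ y ∈ Metric.ball (F x₀) (M ^ 2 / (2 * M + 4 * L) * δ), F (G y) = y) ∧
        DifferentiableOn ℂ G (Metric.ball (F x₀) (M ^ 2 / (2 * M + 4 * L) * δ)) ∧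
        LipschitzOnWith (Real.toNNReal (1 / M)) G
          (Metric.ball (F x₀) (M ^ 2 / (2 * M + 4 * L) * δ))) ∧
      ∀ G' : ℂ → ℂ,
        Set.MapsTo G' (Metric.ball (F x₀) (M ^ 2 / (2 * M + 4 * L) * δ))
            (Metric.ball x₀ (M / (2 * M + 4 * L) * δ)) →
        (∀ y ∈ Metric.ball (F x₀) (M ^ 2 / (2 * M + 4 * L) * δ), F (G' y) = y) →
        Set.EqOn G G' (Metric.ball (F x₀) (M ^ 2 / (2 * M + 4 * L) * δ)) := by
  have hL : 0 < L := hM.trans_le hML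
  set β := M / (2 * M + 4 * L)
  set r := 2 * β * δ
  have hβ : 0 < β := by positivity
  have hrδ : r < δ := by
    have : 2 * β < 1 := by rw [mul_div_assoc', div_lt_one (by positivity)]; linarith
    nlinarith
  have hLβ : 4 * L * β < M := by
    rw [mul_div_assoc', div_lt_iff₀ (by positivity)]; nlinarith
  have hK : 2 * L / δ * r < M := by
    rwa [show 2 * L / δ * r = 4 * L * β by simp only [r]; field_simp; ring]
  have hρ : M ^ 2 / (2 * M + 4 * L) * δ + L / δ * r ^ 2 ≤ M * r := by
    rw [show M ^ 2 / (2 * M + 4 * L) * δ = M * β * δ by ring,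
      show L / δ * r ^ 2 = 4 * L * β * (β * δ) by simp only [r]; field_simp; ring]
    nlinarith [mul_le_mul_of_nonneg_right hLβ.le (mul_pos hβ hδ).le]
  obtain ⟨G, hGS, hGF, hGd, hGlip⟩ :=
    exists_differentiableOn_lipschitzOnWith_rightInvOn hM hf hbd hF (by positivity) hrδ hK hρ
  have hinj : InjOn F (closedBall x₀ r) :=
    injOn_of_norm_sub_sub_mul_le (hK.trans_le (hbd x₀ (mem_ball_self hδ)).1) fun a ha b hb ↦
      norm_sub_sub_mul_le_of_mem_closedBall hf (fun w hw ↦ (hbd w hw).2) hF hrδ ha hb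
  have hFx₀ : F x₀ ∈ ball (F x₀) (M ^ 2 / (2 * M + 4 * L) * δ) := mem_ball_self (by positivity)
  have hGx₀ : G (F x₀) = x₀ := hinj (hGS hFx₀) (mem_closedBall_self (by positivity)) (hGF hFx₀)
  refine ⟨G, ⟨fun y hy ↦ ?_, hGF, hGd, hGlip⟩,
    fun G' hG' hG'F y hy ↦ hinj (hGS hy) ?_ ((hGF hy).trans (hG'F y hy).symm)⟩
  · rw [mem_ball, ← hGx₀]
    calc dist (G y) (G (F x₀)) ≤ 1 / M * dist y (F x₀) := by
          simpa only [Real.coe_toNNReal _ (one_div_pos.2 hM).le] using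
            hGlip.dist_le_mul y hy _ hFx₀
      _ < 1 / M * (M ^ 2 / (2 * M + 4 * L) * δ) := by gcongr; exact mem_ball.1 hy
      _ = β * δ := by simp only [β]; field_simp
  · exact closedBall_subset_closedBall (by nlinarith) (ball_subset_closedBall (hG' hy))
end

section
/- Let (a_j)_{j∈ℕ}, (b_j)_{j∈ℕ} ⊂ (0,∞) be such that lim_{N→∞} Σ_{j=1}^N log a_j exists in ℝ and Σ_{j∈ℕ} |a_j − b_j| < ∞. Then a_min := inf_{j∈ℕ} a_j > 0 and b_min := inf_{j∈ℕ} b_j > 0, the limit lim_{N→∞} ∏_{j=1}^N b_j exists in ℝ, and with C := exp(Σ_{j∈ℕ} |a_j−b_j| / a_min) · (lim_{N→∞} ∏_{j=1}^N a_j) / min{a_min, b_min} < ∞ it holds that |lim_{N→∞} ∏_{j=1}^N a_j − lim_{N→∞} ∏_{j=1}^N b_j| ≤ C Σ_{j∈ℕ} |a_j − b_j|. -/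
/-!
Since `log a_j → 0`, both `a_j` and `b_j` tend to `1`, so their infima `α, β` are positive.
As `∏_{j<N} a_j = exp (∑_{j<N} log a_j)`, the products converge to `Pa = exp l` and
`Pb = exp (l - L)`, where `L = ∑ (log a_j - log b_j)` converges absolutely since
`|log x - log y| ≤ |x - y| / c` for `x, y ≥ c`. With `S = ∑ |a_j - b_j|`, the bound
`|e^x - e^y| ≤ e^{max x y} |x - y|` together with `|L| ≤ S / min α β` and `-L ≤ S / α`
gives the estimate.
-/

open Filter Topology Finset Real

theorem tendsto_zero_of_tendsto_sum_range {G : Type*} [AddCommGroup G] [TopologicalSpace G]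
    [IsTopologicalAddGroup G] {f : ℕ → G} {l : G}
    (h : Tendsto (fun N => ∑ j ∈ range N, f j) atTop (𝓝 l)) : Tendsto f atTop (𝓝 0) := by
  simpa [sum_range_succ] using (h.comp (tendsto_add_atTop_nat 1)).sub h

theorem tendsto_one_of_tendsto_sum_log {a : ℕ → ℝ} {l : ℝ} (ha : ∀ j, 0 < a j)
    (h : Tendsto (fun N => ∑ j ∈ range N, log (a j)) atTop (𝓝 l)) :
    Tendsto a atTop (𝓝 1) := by
  simpa [Function.comp_def, exp_log, ha] using
    (continuous_exp.tendsto 0).comp (tendsto_zero_of_tendsto_sum_range h)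

theorem iInf_pos_of_tendsto {f : ℕ → ℝ} {c : ℝ} (hf : ∀ j, 0 < f j) (hc : 0 < c)
    (h : Tendsto f atTop (𝓝 c)) : 0 < ⨅ j, f j := by
  obtain ⟨N, hN⟩ := eventually_atTop.1 (h.eventually (eventually_gt_nhds (half_lt_self hc)))
  obtain ⟨k, -, hk⟩ := (range (N + 1)).exists_min_image f ⟨0, by simp⟩
  refine (lt_min (half_pos hc) (hf k)).trans_le (le_ciInf fun j => ?_)
  rcases le_or_gt N j with hj | hj
  · exact (min_le_left _ _).trans (hN j hj).le
  · exact (min_le_right _ _).trans (hk j (mem_range.2 (by omega)))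

theorem tendsto_prod_range_of_tendsto_sum_log {a : ℕ → ℝ} {l : ℝ} (ha : ∀ j, 0 < a j)
    (h : Tendsto (fun N => ∑ j ∈ range N, log (a j)) atTop (𝓝 l)) :
    Tendsto (fun N => ∏ j ∈ range N, a j) atTop (𝓝 (exp l)) := by
  have hprod : ∀ N, exp (∑ j ∈ range N, log (a j)) = ∏ j ∈ range N, a j := fun N => by
    rw [exp_sum]
    exact prod_congr rfl fun j _ => exp_log (ha j)
  simpa only [Function.comp_def, hprod] using (continuous_exp.tendsto l).comp h

theorem log_sub_log_le_abs_div {x y c : ℝ} (hc : 0 < c) (hx : c ≤ x) (hy : 0 < y) :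
    log y - log x ≤ |x - y| / c := by
  have hx0 : 0 < x := hc.trans_le hx
  calc log y - log x = log (y / x) := (log_div hy.ne' hx0.ne').symm
    _ ≤ y / x - 1 := log_le_sub_one_of_pos (div_pos hy hx0)
    _ = (y - x) / x := by field_simp
    _ ≤ |x - y| / x := by gcongr; rw [abs_sub_comm]; exact le_abs_self _
    _ ≤ |x - y| / c := by gcongr

theorem abs_log_sub_log_le_abs_div {x y c : ℝ} (hc : 0 < c) (hx : c ≤ x) (hy : c ≤ y) :
    |log x - log y| ≤ |x - y| / c := by
  rw [abs_le, neg_le, neg_sub]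
  refine ⟨log_sub_log_le_abs_div hc hx (hc.trans_le hy), ?_⟩
  rw [abs_sub_comm]
  exact log_sub_log_le_abs_div hc hy (hc.trans_le hx)

theorem abs_exp_sub_exp_le (x y : ℝ) : |exp x - exp y| ≤ exp (max x y) * |x - y| := by
  wlog hyx : y ≤ x generalizing x y
  · rw [abs_sub_comm, max_comm, abs_sub_comm x]
    exact this y x (le_of_not_ge hyx)
  have hexp : exp y = exp x * exp (y - x) := by rw [← exp_add, add_sub_cancel]
  rw [max_eq_left hyx, abs_of_nonneg (sub_nonneg.2 (exp_le_exp.2 hyx)),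
    abs_of_nonneg (sub_nonneg.2 hyx), hexp]
  nlinarith [add_one_le_exp (y - x), exp_pos x]

section LogDifferences

variable {ι : Type*} {a b : ι → ℝ} {c : ℝ}

theorem summable_log_sub_log (hc : 0 < c) (hac : ∀ j, c ≤ a j) (hbc : ∀ j, c ≤ b j)
    (hsum : Summable fun j => |a j - b j|) : Summable fun j => log (a j) - log (b j) :=
  (hsum.div_const c).of_norm_bounded fun j => abs_log_sub_log_le_abs_div hc (hac j) (hbc j)

theorem abs_tsum_log_sub_log_le (hc : 0 < c) (hac : ∀ j, c ≤ a j) (hbc : ∀ j, c ≤ b j)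
    (hsum : Summable fun j => |a j - b j|) :
    |∑' j, (log (a j) - log (b j))| ≤ (∑' j, |a j - b j|) / c :=
  tsum_of_norm_bounded (f := fun j => log (a j) - log (b j)) (hsum.hasSum.div_const c) fun j =>
    abs_log_sub_log_le_abs_div hc (hac j) (hbc j)

theorem neg_tsum_log_sub_log_le (hc : 0 < c) (hac : ∀ j, c ≤ a j) (hb : ∀ j, 0 < b j)
    (hsum : Summable fun j => |a j - b j|)
    (hlog : Summable fun j => log (a j) - log (b j)) :
    -∑' j, (log (a j) - log (b j)) ≤ (∑' j, |a j - b j|) / c := by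
  refine hasSum_le (fun j => log_sub_log_le_abs_div hc (hac j) (hb j)) ?_
    (hsum.hasSum.div_const c)
  simpa only [neg_sub] using hlog.hasSum.neg

end LogDifferences

/-- stability of infinite products.
If `(a_j), (b_j) ⊂ (0,∞)` are such that `lim_N Σ_{j<N} log a_j` exists in `ℝ` and
`Σ_j |a_j − b_j| < ∞`, then `inf_j a_j > 0`, `inf_j b_j > 0`, the limits
`Pa = lim_N Π_{j<N} a_j` and `Pb = lim_N Π_{j<N} b_j` exist in `ℝ`, and
`|Pa − Pb| ≤ C·Σ_j |a_j − b_j|` with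
`C = exp(Σ_j |a_j−b_j| / inf_j a_j)·Pa / min(inf_j a_j, inf_j b_j)`. -/
theorem stmt10 (a b : ℕ → ℝ) (ha : ∀ j, 0 < a j) (hb : ∀ j, 0 < b j)
    (hlog : ∃ l : ℝ,
      Tendsto (fun N => ∑ j ∈ Finset.range N, Real.log (a j)) atTop (nhds l))
    (hsum : Summable fun j => |a j - b j|) :
    (0 < ⨅ j, a j) ∧ (0 < ⨅ j, b j) ∧
      ∃ Pa Pb : ℝ,
        Tendsto (fun N => ∏ j ∈ Finset.range N, a j) atTop (nhds Pa) ∧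
        Tendsto (fun N => ∏ j ∈ Finset.range N, b j) atTop (nhds Pb) ∧
        |Pa - Pb| ≤
          Real.exp ((∑' j, |a j - b j|) / (⨅ j, a j)) * Pa /
              min (⨅ j, a j) (⨅ j, b j) * ∑' j, |a j - b j| := by
  obtain ⟨l, hl⟩ := hlog
  have ha1 := tendsto_one_of_tendsto_sum_log ha hl
  have hb1 : Tendsto b atTop (𝓝 1) := by
    simpa using ha1.sub ((tendsto_zero_iff_abs_tendsto_zero _).2 hsum.tendsto_atTop_zero)
  set α := ⨅ j, a j
  set β := ⨅ j, b j
  have hα : 0 < α := iInf_pos_of_tendsto ha one_pos ha1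
  have hβ : 0 < β := iInf_pos_of_tendsto hb one_pos hb1
  have hαa : ∀ j, α ≤ a j := ciInf_le ⟨0, Set.forall_mem_range.2 fun j => (ha j).le⟩
  have hβb : ∀ j, β ≤ b j := ciInf_le ⟨0, Set.forall_mem_range.2 fun j => (hb j).le⟩
  have hm : 0 < min α β := lt_min hα hβ
  have hma j : min α β ≤ a j := (min_le_left _ _).trans (hαa j)
  have hmb j : min α β ≤ b j := (min_le_right _ _).trans (hβb j)
  have hlogab := summable_log_sub_log hm hma hmb hsum
  set L := ∑' j, (log (a j) - log (b j))
  set S := ∑' j, |a j - b j|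
  refine ⟨hα, hβ, exp l, exp (l - L), tendsto_prod_range_of_tendsto_sum_log ha hl,
    tendsto_prod_range_of_tendsto_sum_log hb ?_, ?_⟩
  · simpa [sum_sub_distrib] using hl.sub hlogab.hasSum.tendsto_sum_nat
  have hmax : max l (l - L) ≤ S / α + l := by
    have hS : 0 ≤ S / α := div_nonneg (tsum_nonneg fun j => abs_nonneg _) hα.le
    have hL : -L ≤ S / α := neg_tsum_log_sub_log_le hα hαa hb hsum hlogab
    exact max_le (by linarith) (by linarith)
  calc |exp l - exp (l - L)| ≤ exp (max l (l - L)) * |l - (l - L)| := abs_exp_sub_exp_le _ _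
    _ ≤ exp (S / α + l) * (S / min α β) := by
      rw [sub_sub_cancel]
      gcongr
      exact abs_tsum_log_sub_log_le hm hma hmb hsum
    _ = exp (S / α) * exp l / min α β * S := by rw [exp_add]; ring
end

section
/- Let f_ρ, f_π satisfy Assumption (A) with constants M, L, δ, C₆, let β := ((d−1)! ∏_{j=1}^d log(1+C₇δ_j))^{1/d}, and for ε > 0 let S̃_ε be the monotone triangular rational bijection of [-1,1]^d produced by the rational-approximation proposition for the inverse Knothe–Rosenblatt transport S = T^{-1} (so that ‖S_k − S̃_{ε,k}‖_{W^{1,∞}} ≤ C exp(−τβ N_ε^{1/d}) for all k). Then for every τ ∈ (0,1) there exists C = C(d,τ,ρ,π) > 0 such that for every ε > 0, with g_ε := (f_ρ∘S̃_ε)·det dS̃_ε the density of the pullback measure S̃_ε^♯ρ, each of the quantities d_H(S̃_ε^♯ρ, π) := (½∫_{[-1,1]^d}(√g_ε − √f_π)² dμ)^{1/2}, d_TV(S̃_ε^♯ρ, π) := ½∫_{[-1,1]^d}|g_ε − f_π| dμ, and D_KL(S̃_ε^♯ρ ‖ π) := ∫_{[-1,1]^d} g_ε · log(g_ε/f_π)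 dμ is bounded by C exp(−τβ N_ε^{1/d}). -/
open Set MeasureTheory

/-- The uniform probability measure `μ₁` on `[-1,1]` (half of Lebesgue measure). -/
noncomputable def mu1 : Measure ℝ :=
  (2 : ENNReal)⁻¹ • (volume.restrict (Set.Icc (-1 : ℝ) 1))

/-- The product measure `μ = μ₁^{⊗d}` on `[-1,1]^d`. -/
noncomputable def muD (d : ℕ) : Measure (Fin d → ℝ) := Measure.pi fun _ => mu1

/-- The cube `[-1,1]^d`. -/
def cube (d : ℕ) : Set (Fin d → ℝ) := {x | ∀ j, x j ∈ Set.Icc (-1 : ℝ) 1}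

/-- `[-1,1]` regarded as a subset of `ℂ`. -/
def segC : Set ℂ := Complex.ofReal '' Set.Icc (-1 : ℝ) 1

/-- The open `δ`-neighborhood `B_δ(S)` of a set `S ⊆ ℂ`. -/
def cNbhd (δ : ℝ) (S : Set ℂ) : Set ℂ := {z : ℂ | ∃ y ∈ S, ‖z - y‖ < δ}

/-- The multi-index set `Λ_{k,ε}` (with `k = j+1`, multi-indices realized in `ℕ^d` with
support in `{i : i ≤ j}`, and `γ(ξ,ν) = ξ_j^{-max{1,ν_j}}·∏_{i<j} ξ_i^{-ν_i}`). -/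
def Lam (d : ℕ) (ξ : Fin d → ℝ) (j : Fin d) (ε : ℝ) : Set (Fin d → ℕ) :=
  {ν | (∀ i : Fin d, ¬i ≤ j → ν i = 0) ∧
    ε ≤ (ξ j)⁻¹ ^ max 1 (ν j) *
        ∏ i ∈ Finset.univ.filter (fun i : Fin d => i < j), (ξ i)⁻¹ ^ ν i}

/-- Partial derivative of `g` in the `i`-th coordinate (within the cube). -/
noncomputable def pd (d : ℕ) (g : (Fin d → ℝ) → ℝ) (i : Fin d) (x : Fin d → ℝ) : ℝ :=
  derivWithin (fun t => g (Function.update x i t)) (Set.Icc (-1 : ℝ) 1) (x i)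

/-- The Jacobian determinant `det dS(x) = ∏_j ∂_{x_j}S_j(x)` of a triangular map. -/
noncomputable def detd (d : ℕ) (S : (Fin d → ℝ) → Fin d → ℝ) (x : Fin d → ℝ) : ℝ :=
  ∏ j : Fin d, pd d (fun y => S y j) j x

/-- The `W^{1,∞}([-1,1]^d)` distance of two maps. -/
noncomputable def W1dist (d : ℕ) (S S' : (Fin d → ℝ) → Fin d → ℝ) : ℝ :=
  max (⨆ j : Fin d, ⨆ x : cube d, |S (x : Fin d → ℝ) j - S' (x : Fin d → ℝ) j|)
    (⨆ j : Fin d, ⨆ i : Fin d, ⨆ x : cube d,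
      |pd d (fun y => S y j) i (x : Fin d → ℝ) - pd d (fun y => S' y j) i (x : Fin d → ℝ)|)

/-!
Since `S` pulls `ρ` back to `π`, `f_π = (f_ρ ∘ S) · det dS` on the cube, so the pullback density
`g_ε = (f_ρ ∘ S̃_ε) · det dS̃_ε` differs from `f_π` only through `S̃_ε - S` and the diagonal partial
derivatives `∂_j S̃_{ε,j} - ∂_j S_j`. Cauchy's estimate makes `f_ρ` Lipschitz on the cube, one
coordinate at a time, and the product `det` is Lipschitz on bounded sets, so
`|g_ε - f_π| ≤ K ‖S - S̃_ε‖_{W^{1,∞}}` with `K` independent of `ε` (the rate is at most `1`, which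
bounds the derivatives of `S̃_ε` uniformly). As `f_π ≥ M`, the pointwise inequalities
`(√g - √p)² ≤ (g - p)² / p` and `g log (g / p) ≤ (g / p) (g - p)` (from `log y ≤ y - 1`) turn this
into bounds on all three divergences that are linear in the `W^{1,∞}` distance.
-/

open Function

noncomputable def reOnReals {d : ℕ} (f : (Fin d → ℂ) → ℂ) (x : Fin d → ℝ) : ℝ :=
  (f fun i => (x i : ℂ)).re

noncomputable def pullbackDensity {d : ℕ} (f : (Fin d → ℂ) → ℂ) (T : (Fin d → ℝ) → Fin d → ℝ)
    (x : Fin d → ℝ) : ℝ :=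
  reOnReals f (T x) * detd d T x

noncomputable def diagPd (d : ℕ) (T : (Fin d → ℝ) → Fin d → ℝ) (x : Fin d → ℝ) : Fin d → ℝ :=
  fun j => pd d (fun y => T y j) j x

def polydiscNbhd {d : ℕ} (δ : Fin d → ℝ) : Set (Fin d → ℂ) :=
  {z | ∀ i, z i ∈ cNbhd (δ i) segC}

section

variable {α : Type*} [MeasurableSpace α]

noncomputable def hellingerDist (μ : Measure α) (g p : α → ℝ) : ℝ :=
  √(2⁻¹ * ∫ x, (√(g x) - √(p x)) ^ 2 ∂μ)

noncomputable def tvDist (μ : Measure α) (g p : α → ℝ) : ℝ :=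
  2⁻¹ * ∫ x, |g x - p x| ∂μ

noncomputable def klDivergence (μ : Measure α) (g p : α → ℝ) : ℝ :=
  ∫ x, g x * Real.log (g x / p x) ∂μ

end

lemma cube_eq_pi (d : ℕ) : cube d = univ.pi fun _ => Icc (-1 : ℝ) 1 := by
  ext x
  exact mem_univ_pi.symm

lemma zero_mem_cube (d : ℕ) : (0 : Fin d → ℝ) ∈ cube d :=
  fun _ => by norm_num

lemma update_mem_cube {d : ℕ} {x : Fin d → ℝ} (hx : x ∈ cube d) (i : Fin d) {t : ℝ}
    (ht : t ∈ Icc (-1 : ℝ) 1) : update x i t ∈ cube d := by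
  intro j
  rcases eq_or_ne j i with rfl | hji
  · simpa using ht
  · simpa [hji] using hx j

lemma isCompact_cube (d : ℕ) : IsCompact (cube d) := by
  rw [cube_eq_pi]
  exact isCompact_univ_pi fun _ => isCompact_Icc

lemma uniqueDiffOn_cube (d : ℕ) : UniqueDiffOn ℝ (cube d) := by
  rw [cube_eq_pi]
  exact .univ_pi fun _ => uniqueDiffOn_Icc (by norm_num)

lemma mu1_Icc : mu1 (Icc (-1) 1) = 1 := by
  simp [mu1, one_add_one_eq_two, ENNReal.inv_mul_cancel]

instance : IsProbabilityMeasure mu1 :=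
  ⟨by rw [← mu1_Icc, mu1, Measure.smul_apply, Measure.smul_apply, Measure.restrict_apply_univ,
    Measure.restrict_apply_self]⟩

instance (d : ℕ) : IsProbabilityMeasure (muD d) := by
  unfold muD
  infer_instance

lemma ae_mem_cube (d : ℕ) : ∀ᵐ x ∂muD d, x ∈ cube d := by
  have hcube : muD d (cube d) = 1 := by
    rw [cube_eq_pi, muD, Measure.pi_pi]
    simp [mu1_Icc]
  have hmeas : MeasurableSet (cube d) := by
    rw [cube_eq_pi]
    exact .univ_pi fun _ => measurableSet_Icc
  exact (prob_compl_eq_zero_iff hmeas).mpr hcube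

section Divergences

variable {α : Type*} [MeasurableSpace α] {μ : Measure α} [IsProbabilityMeasure μ]

lemma integral_le_of_ae_le {f : α → ℝ} {b : ℝ} (hb : 0 ≤ b) (hf : ∀ᵐ x ∂μ, f x ≤ b) :
    ∫ x, f x ∂μ ≤ b := by
  by_cases hi : Integrable f μ
  · simpa using integral_mono_ae hi (integrable_const b) hf
  · simpa [integral_undef hi] using hb

lemma sqrt_sub_sqrt_sq_le {g p : ℝ} (hg : 0 ≤ g) (hp : 0 < p) :
    (√g - √p) ^ 2 ≤ (g - p) ^ 2 / p := by
  have hprod : (√g - √p) * (√g + √p) = g - p := by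
    linear_combination Real.sq_sqrt hg - Real.sq_sqrt hp.le
  have hsum : √p ^ 2 ≤ (√g + √p) ^ 2 :=
    pow_le_pow_left₀ (Real.sqrt_nonneg p) (le_add_of_nonneg_left (Real.sqrt_nonneg g)) 2
  rw [le_div_iff₀ hp, ← hprod, mul_pow]
  calc (√g - √p) ^ 2 * p = (√g - √p) ^ 2 * √p ^ 2 := by rw [Real.sq_sqrt hp.le]
    _ ≤ (√g - √p) ^ 2 * (√g + √p) ^ 2 := mul_le_mul_of_nonneg_left hsum (sq_nonneg _)

lemma mul_log_div_le {g p : ℝ} (hg : 0 ≤ g) (hp : 0 < p) :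
    g * Real.log (g / p) ≤ g / p * (g - p) := by
  rcases hg.eq_or_lt with rfl | hg
  · simp
  have h := Real.log_le_sub_one_of_pos (div_pos hg hp)
  calc g * Real.log (g / p) ≤ g * (g / p - 1) := mul_le_mul_of_nonneg_left h hg.le
    _ = g / p * (g - p) := by field_simp

variable {g p : α → ℝ} {m G η : ℝ}

lemma hellingerDist_le (hm : 0 < m) (hη : 0 ≤ η)
    (h : ∀ᵐ x ∂μ, 0 ≤ g x ∧ m ≤ p x ∧ |g x - p x| ≤ η) :
    hellingerDist μ g p ≤ (√(2 * m))⁻¹ * η := by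
  have hint : ∫ x, (√(g x) - √(p x)) ^ 2 ∂μ ≤ η ^ 2 / m := by
    refine integral_le_of_ae_le (by positivity) (h.mono fun x ⟨hg, hpm, hgp⟩ => ?_)
    have hp := hm.trans_le hpm
    calc (√(g x) - √(p x)) ^ 2 ≤ (g x - p x) ^ 2 / p x := sqrt_sub_sqrt_sq_le hg hp
      _ ≤ η ^ 2 / m :=
        div_le_div₀ (sq_nonneg η) (sq_le_sq' (abs_le.mp hgp).1 (abs_le.mp hgp).2) hm hpm
  calc hellingerDist μ g p ≤ √(η ^ 2 / (2 * m)) := by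
        refine Real.sqrt_le_sqrt ?_
        calc 2⁻¹ * ∫ x, (√(g x) - √(p x)) ^ 2 ∂μ ≤ 2⁻¹ * (η ^ 2 / m) := by gcongr
          _ = η ^ 2 / (2 * m) := by ring
    _ = (√(2 * m))⁻¹ * η := by
        rw [Real.sqrt_div' _ (by positivity), Real.sqrt_sq hη, inv_mul_eq_div]

lemma tvDist_le (hη : 0 ≤ η) (h : ∀ᵐ x ∂μ, |g x - p x| ≤ η) : tvDist μ g p ≤ 2⁻¹ * η := by
  unfold tvDist
  gcongr
  exact integral_le_of_ae_le hη h

lemma klDivergence_le (hm : 0 < m) (hG : 0 ≤ G) (hη : 0 ≤ η)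
    (h : ∀ᵐ x ∂μ, 0 ≤ g x ∧ g x ≤ G ∧ m ≤ p x ∧ |g x - p x| ≤ η) :
    klDivergence μ g p ≤ G / m * η := by
  refine integral_le_of_ae_le (by positivity) (h.mono fun x ⟨hg, hgG, hpm, hgp⟩ => ?_)
  have hp := hm.trans_le hpm
  calc g x * Real.log (g x / p x) ≤ g x / p x * (g x - p x) := mul_log_div_le hg hp
    _ ≤ g x / p x * |g x - p x| :=
      mul_le_mul_of_nonneg_left (le_abs_self _) (div_nonneg hg hp.le)
    _ ≤ G / m * η := mul_le_mul (div_le_div₀ hG hgG hm hpm) hgp (abs_nonneg _) (by positivity)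

end Divergences

lemma dist_le_sum_of_dist_update_le {ι α E : Type*} [Fintype ι] [DecidableEq ι]
    [PseudoMetricSpace α] [PseudoMetricSpace E] {I : ι → Set α} {g : (ι → α) → E} {K : ι → ℝ}
    (hg : ∀ x ∈ univ.pi I, ∀ i, ∀ t ∈ I i, dist (g (update x i t)) (g x) ≤ K i * dist t (x i))
    {u v : ι → α} (hu : u ∈ univ.pi I) (hv : v ∈ univ.pi I) :
    dist (g v) (g u) ≤ ∑ i, K i * dist (v i) (u i) := by
  suffices h : ∀ s : Finset ι,
      dist (g (s.piecewise v u)) (g u) ≤ ∑ i ∈ s, K i * dist (v i) (u i) by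
    simpa using h Finset.univ
  intro s
  induction s using Finset.induction_on with
  | empty => simp
  | insert i s hi ih =>
    have hmem : s.piecewise v u ∈ univ.pi I := s.piecewise_mem_set_pi hv hu
    have hstep := hg _ hmem i (v i) (hv i (mem_univ i))
    rw [Finset.piecewise_eq_of_notMem _ _ _ hi] at hstep
    rw [Finset.piecewise_insert, Finset.sum_insert hi]
    exact (dist_triangle _ _ _).trans (add_le_add hstep ih)

lemma isOpen_cNbhd (r : ℝ) (s : Set ℂ) : IsOpen (cNbhd r s) := by
  have h : cNbhd r s = ⋃ y ∈ s, Metric.ball y r := by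
    ext z
    simp [cNbhd, dist_eq_norm]
  rw [h]
  exact isOpen_biUnion fun _ _ => Metric.isOpen_ball

lemma ball_subset_cNbhd {r : ℝ} {s : Set ℂ} {z : ℂ} (hz : z ∈ s) :
    Metric.ball z r ⊆ cNbhd r s :=
  fun w hw => ⟨z, hz, by rwa [Metric.mem_ball, dist_eq_norm] at hw⟩

lemma norm_sub_le_of_differentiableOn_cNbhd {E : Type*} [NormedAddCommGroup E]
    [NormedSpace ℂ E] {s : Set ℂ} (hs : Convex ℝ s) {r L : ℝ} (hr : 0 < r) {φ : ℂ → E}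
    (hφ : DifferentiableOn ℂ φ (cNbhd r s)) (hL : ∀ z ∈ cNbhd r s, ‖φ z‖ ≤ L) {a b : ℂ}
    (ha : a ∈ s) (hb : b ∈ s) : ‖φ b - φ a‖ ≤ 2 * L / r * ‖b - a‖ := by
  have hball : ∀ z ∈ s, Metric.ball z r ⊆ cNbhd r s := fun z hz => ball_subset_cNbhd hz
  refine hs.norm_image_sub_le_of_norm_deriv_le (fun z hz => hφ.differentiableAt
    ((isOpen_cNbhd r s).mem_nhds (hball z hz (Metric.mem_ball_self hr)))) (fun z hz => ?_) ha hb
  refine Complex.norm_deriv_le_div_of_mapsTo_ball (hφ.mono (hball z hz)) (fun w hw => ?_) hr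
  rw [Metric.mem_closedBall, dist_eq_norm, two_mul]
  exact (norm_sub_le _ _).trans
    (add_le_add (hL w (hball z hz hw)) (hL z (hball z hz (Metric.mem_ball_self hr))))

lemma convex_segC : Convex ℝ segC :=
  (convex_Icc (-1 : ℝ) 1).linear_image Complex.ofRealCLM.toLinearMap

lemma ofReal_mem_segC {t : ℝ} (ht : t ∈ Icc (-1 : ℝ) 1) : (t : ℂ) ∈ segC :=
  mem_image_of_mem _ ht

lemma ofReal_mem_cNbhd {r : ℝ} (hr : 0 < r) {t : ℝ} (ht : t ∈ Icc (-1 : ℝ) 1) :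
    (t : ℂ) ∈ cNbhd r segC :=
  ball_subset_cNbhd (ofReal_mem_segC ht) (Metric.mem_ball_self hr)

section Holomorphic

variable {d : ℕ} {δ : Fin d → ℝ} {L : ℝ} {f : (Fin d → ℂ) → ℂ}

lemma ofReal_mem_polydiscNbhd (hδ : ∀ i, 0 < δ i) {x : Fin d → ℝ} (hx : x ∈ cube d) :
    (fun i => (x i : ℂ)) ∈ polydiscNbhd δ :=
  fun i => ofReal_mem_cNbhd (hδ i) (hx i)

lemma dist_update_le_of_differentiableOn (hδ : ∀ i, 0 < δ i)
    (hf : DifferentiableOn ℂ f (polydiscNbhd δ)) (hfL : ∀ z ∈ polydiscNbhd δ, ‖f z‖ ≤ L)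
    {x : Fin d → ℝ} (hx : x ∈ cube d) (i : Fin d) {t : ℝ} (ht : t ∈ Icc (-1 : ℝ) 1) :
    dist (f fun k => (update x i t k : ℂ)) (f fun k => (x k : ℂ)) ≤
      2 * L / δ i * dist t (x i) := by
  set c : Fin d → ℂ := fun k => (x k : ℂ)
  have hmaps : MapsTo (update c i) (cNbhd (δ i) segC) (polydiscNbhd δ) := by
    intro z hz k
    rcases eq_or_ne k i with rfl | hki
    · simpa using hz
    · simpa [hki] using ofReal_mem_cNbhd (hδ k) (hx k)
  have hφ : DifferentiableOn ℂ (fun z => f (update c i z)) (cNbhd (δ i) segC) :=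
    hf.comp (fun z _ => (hasDerivAt_update c i z).differentiableAt.differentiableWithinAt) hmaps
  have key := norm_sub_le_of_differentiableOn_cNbhd convex_segC (hδ i) hφ
    (fun z hz => hfL _ (hmaps hz)) (ofReal_mem_segC (hx i)) (ofReal_mem_segC ht)
  have hupd : (fun k => (update x i t k : ℂ)) = update c i (t : ℂ) :=
    (comp_update Complex.ofReal x i t).symm ▸ rfl
  rw [dist_eq_norm, hupd, Real.dist_eq]
  simpa [c, ← Complex.ofReal_sub] using key

lemma abs_reOnReals_sub_le (hδ : ∀ i, 0 < δ i) (hL : 0 ≤ L)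
    (hf : DifferentiableOn ℂ f (polydiscNbhd δ)) (hfL : ∀ z ∈ polydiscNbhd δ, ‖f z‖ ≤ L)
    {u v : Fin d → ℝ} (hu : u ∈ cube d) (hv : v ∈ cube d) :
    |reOnReals f v - reOnReals f u| ≤ (∑ i, 2 * L / δ i) * ‖v - u‖ := by
  rw [cube_eq_pi] at hu hv
  have hlip := dist_le_sum_of_dist_update_le (g := fun y : Fin d → ℝ => f fun k => (y k : ℂ))
    (fun y hy i t ht => dist_update_le_of_differentiableOn hδ hf hfL (cube_eq_pi d ▸ hy) i ht)
    hu hv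
  calc |reOnReals f v - reOnReals f u|
      ≤ dist (f fun k => (v k : ℂ)) (f fun k => (u k : ℂ)) := by
        rw [reOnReals, reOnReals, ← Complex.sub_re, dist_eq_norm]
        exact Complex.abs_re_le_norm _
    _ ≤ ∑ i, 2 * L / δ i * dist (v i) (u i) := hlip
    _ ≤ (∑ i, 2 * L / δ i) * ‖v - u‖ := by
        rw [Finset.sum_mul]
        gcongr with i
        · exact div_nonneg (by positivity) (hδ i).le
        · exact dist_le_pi_dist v u i |>.trans_eq (dist_eq_norm v u)

end Holomorphic

section PartialDerivatives

variable {d : ℕ} {T : (Fin d → ℝ) → Fin d → ℝ}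

lemma pd_eq_fderivWithin (hT : ContDiffOn ℝ 1 T (cube d)) (j i : Fin d) {x : Fin d → ℝ}
    (hx : x ∈ cube d) :
    pd d (fun y => T y j) i x = fderivWithin ℝ T (cube d) x (Pi.single i 1) j := by
  have hT' : HasFDerivWithinAt T (fderivWithin ℝ T (cube d) x) (cube d) (update x i (x i)) := by
    rw [update_eq_self]
    exact (hT.differentiableOn one_ne_zero x hx).hasFDerivWithinAt
  have hslice := hT'.comp_hasDerivWithinAt (x i) (hasDerivAt_update x i (x i)).hasDerivWithinAt
    fun t ht => update_mem_cube hx i ht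
  exact (hasDerivWithinAt_pi.mp hslice j).derivWithin (uniqueDiffOn_Icc (by norm_num) _ (hx i))

lemma exists_abs_pd_le (hT : ContDiffOn ℝ 1 T (cube d)) :
    ∃ B, 0 ≤ B ∧ ∀ j i, ∀ x ∈ cube d, |pd d (fun y => T y j) i x| ≤ B := by
  obtain ⟨B, hB⟩ := (isCompact_cube d).exists_bound_of_continuousOn
    (hT.continuousOn_fderivWithin (uniqueDiffOn_cube d) le_rfl)
  refine ⟨B, (norm_nonneg _).trans (hB 0 (zero_mem_cube d)), fun j i x hx => ?_⟩
  rw [pd_eq_fderivWithin hT j i hx, ← Real.norm_eq_abs]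
  calc ‖fderivWithin ℝ T (cube d) x (Pi.single i 1) j‖
      ≤ ‖fderivWithin ℝ T (cube d) x (Pi.single i 1)‖ := norm_le_pi_norm _ j
    _ ≤ ‖fderivWithin ℝ T (cube d) x‖ * ‖(Pi.single i 1 : Fin d → ℝ)‖ :=
      ContinuousLinearMap.le_opNorm _ _
    _ ≤ B := by simpa [Pi.norm_single] using hB x hx

lemma diagPd_nonneg {x : Fin d → ℝ}
    (hT : ∀ j, MonotoneOn (fun t => T (update x j t) j) (Icc (-1) 1)) (j : Fin d) :
    0 ≤ diagPd d T x j :=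
  (hT j).derivWithin_nonneg

lemma norm_diagPd_le {B : ℝ} (hB0 : 0 ≤ B)
    (hB : ∀ j, ∀ x ∈ cube d, |pd d (fun y => T y j) j x| ≤ B) {x : Fin d → ℝ}
    (hx : x ∈ cube d) : ‖diagPd d T x‖ ≤ B :=
  (pi_norm_le_iff_of_nonneg hB0).2 fun j => hB j x hx

end PartialDerivatives

section W1dist

variable {d : ℕ} {S T : (Fin d → ℝ) → Fin d → ℝ}

lemma W1dist_nonneg : 0 ≤ W1dist d S T :=
  le_max_of_le_left (Real.iSup_nonneg fun _ => Real.iSup_nonneg fun _ => abs_nonneg _)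

lemma abs_sub_le_W1dist (hS : MapsTo S (cube d) (cube d)) (hT : MapsTo T (cube d) (cube d))
    (j : Fin d) {x : Fin d → ℝ} (hx : x ∈ cube d) : |S x j - T x j| ≤ W1dist d S T := by
  have hbdd : BddAbove (range fun y : cube d => |S y j - T y j|) := by
    refine ⟨2, forall_mem_range.2 fun y => abs_sub_le_iff.2 ?_⟩
    obtain ⟨hS₁, hS₂⟩ := hS y.2 j
    obtain ⟨hT₁, hT₂⟩ := hT y.2 j
    constructor <;> linarith
  exact le_max_of_le_left
    (le_ciSup_of_le (finite_range _).bddAbove j (le_ciSup hbdd (⟨x, hx⟩ : cube d)))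

lemma abs_pd_sub_le_W1dist {B B' : ℝ}
    (hS : ∀ j i, ∀ x ∈ cube d, |pd d (fun y => S y j) i x| ≤ B)
    (hT : ∀ j i, ∀ x ∈ cube d, |pd d (fun y => T y j) i x| ≤ B')
    (j i : Fin d) {x : Fin d → ℝ} (hx : x ∈ cube d) :
    |pd d (fun y => S y j) i x - pd d (fun y => T y j) i x| ≤ W1dist d S T := by
  have hbdd : BddAbove (range fun y : cube d =>
      |pd d (fun z => S z j) i y - pd d (fun z => T z j) i y|) :=
    ⟨B + B', forall_mem_range.2 fun y =>
      (abs_sub _ _).trans (add_le_add (hS j i y y.2) (hT j i y y.2))⟩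
  exact le_max_of_le_right (le_ciSup_of_le (finite_range _).bddAbove j
    (le_ciSup_of_le (finite_range _).bddAbove i (le_ciSup hbdd (⟨x, hx⟩ : cube d))))

lemma norm_sub_le_W1dist (hS : MapsTo S (cube d) (cube d)) (hT : MapsTo T (cube d) (cube d))
    {x : Fin d → ℝ} (hx : x ∈ cube d) : ‖T x - S x‖ ≤ W1dist d S T :=
  (pi_norm_le_iff_of_nonneg W1dist_nonneg).2 fun j => by
    simpa [abs_sub_comm] using abs_sub_le_W1dist hS hT j hx

lemma norm_diagPd_sub_le_W1dist {B B' : ℝ}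
    (hS : ∀ j i, ∀ x ∈ cube d, |pd d (fun y => S y j) i x| ≤ B)
    (hT : ∀ j i, ∀ x ∈ cube d, |pd d (fun y => T y j) i x| ≤ B') {x : Fin d → ℝ}
    (hx : x ∈ cube d) : ‖diagPd d T x - diagPd d S x‖ ≤ W1dist d S T :=
  (pi_norm_le_iff_of_nonneg W1dist_nonneg).2 fun j => by
    simpa [diagPd, abs_sub_comm] using abs_pd_sub_le_W1dist hS hT j j hx

end W1dist

lemma abs_prod_sub_prod_le {ι : Type*} [Fintype ι] (a b : ι → ℝ) :
    |∏ i, a i - ∏ i, b i| ≤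
      Fintype.card ι * max ‖a‖ ‖b‖ ^ (Fintype.card ι - 1) * ‖a - b‖ := by
  simpa [ContinuousMultilinearMap.norm_mkPiAlgebra] using
    (ContinuousMultilinearMap.mkPiAlgebra ℝ ι ℝ).norm_image_sub_le a b

lemma abs_prod_le_norm_pow {ι : Type*} [Fintype ι] (a : ι → ℝ) :
    |∏ i, a i| ≤ ‖a‖ ^ Fintype.card ι := by
  rw [Finset.abs_prod, ← Finset.card_univ, ← Finset.prod_const]
  exact Finset.prod_le_prod (fun _ _ => abs_nonneg _) fun i _ => norm_le_pi_norm a i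

section PullbackDensity

variable {d : ℕ} {δ : Fin d → ℝ} {L B : ℝ} {f : (Fin d → ℂ) → ℂ}
  {S T : (Fin d → ℝ) → Fin d → ℝ} {x : Fin d → ℝ}

lemma abs_reOnReals_le (hδ : ∀ i, 0 < δ i) (hfL : ∀ z ∈ polydiscNbhd δ, ‖f z‖ ≤ L)
    (hx : x ∈ cube d) : |reOnReals f x| ≤ L :=
  (Complex.abs_re_le_norm _).trans (hfL _ (ofReal_mem_polydiscNbhd hδ hx))

lemma abs_detd_le (hB : ‖diagPd d T x‖ ≤ B) : |detd d T x| ≤ B ^ d :=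
  calc |detd d T x|
      ≤ ‖diagPd d T x‖ ^ d := by simpa [detd, diagPd] using abs_prod_le_norm_pow (diagPd d T x)
    _ ≤ B ^ d := pow_le_pow_left₀ (norm_nonneg _) hB d

lemma pullbackDensity_le (hδ : ∀ i, 0 < δ i) (hL : 0 ≤ L)
    (hfL : ∀ z ∈ polydiscNbhd δ, ‖f z‖ ≤ L) (hTx : T x ∈ cube d) (hB : ‖diagPd d T x‖ ≤ B) :
    pullbackDensity f T x ≤ L * B ^ d := by
  refine (le_abs_self _).trans ?_
  rw [pullbackDensity, abs_mul]
  exact mul_le_mul (abs_reOnReals_le hδ hfL hTx) (abs_detd_le hB) (abs_nonneg _) hL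

lemma pullbackDensity_nonneg (hf : ∀ y ∈ cube d, 0 ≤ reOnReals f y) (hTx : T x ∈ cube d)
    (hT : ∀ j, MonotoneOn (fun t => T (update x j t) j) (Icc (-1) 1)) :
    0 ≤ pullbackDensity f T x :=
  mul_nonneg (hf _ hTx) (Finset.prod_nonneg fun j _ => diagPd_nonneg hT j)

lemma abs_pullbackDensity_sub_le {w : ℝ} (hδ : ∀ i, 0 < δ i) (hL : 0 ≤ L)
    (hf : DifferentiableOn ℂ f (polydiscNbhd δ)) (hfL : ∀ z ∈ polydiscNbhd δ, ‖f z‖ ≤ L)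
    (hSx : S x ∈ cube d) (hTx : T x ∈ cube d)
    (hSB : ‖diagPd d S x‖ ≤ B) (hTB : ‖diagPd d T x‖ ≤ B)
    (hw : ‖T x - S x‖ ≤ w) (hw' : ‖diagPd d T x - diagPd d S x‖ ≤ w) :
    |pullbackDensity f T x - pullbackDensity f S x| ≤
      (L * d * B ^ (d - 1) + (∑ i, 2 * L / δ i) * B ^ d) * w := by
  have hB0 : 0 ≤ B := (norm_nonneg _).trans hSB
  have hw0 : 0 ≤ w := (norm_nonneg _).trans hw
  have hK : 0 ≤ ∑ i, 2 * L / δ i :=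
    Finset.sum_nonneg fun i _ => div_nonneg (by positivity) (hδ i).le
  have hdet : |detd d T x - detd d S x| ≤ d * B ^ (d - 1) * w := by
    refine (abs_prod_sub_prod_le (diagPd d T x) (diagPd d S x)).trans ?_
    simp only [Fintype.card_fin]
    gcongr
    exact max_le hTB hSB
  have hr := abs_reOnReals_sub_le hδ hL hf hfL hSx hTx
  calc |pullbackDensity f T x - pullbackDensity f S x|
      = |reOnReals f (T x) * (detd d T x - detd d S x) +
          (reOnReals f (T x) - reOnReals f (S x)) * detd d S x| := by
        rw [pullbackDensity, pullbackDensity]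
        ring_nf
    _ ≤ |reOnReals f (T x)| * |detd d T x - detd d S x| +
          |reOnReals f (T x) - reOnReals f (S x)| * |detd d S x| := by
        rw [← abs_mul, ← abs_mul]
        exact abs_add_le _ _
    _ ≤ L * (d * B ^ (d - 1) * w) + (∑ i, 2 * L / δ i) * w * B ^ d := by
        gcongr
        · exact abs_reOnReals_le hδ hfL hTx
        · exact hr.trans (mul_le_mul_of_nonneg_left hw hK)
        · exact abs_detd_le hSB
    _ = (L * d * B ^ (d - 1) + (∑ i, 2 * L / δ i) * B ^ d) * w := by ring

lemma pullbackDensity_bounds_of_W1dist_le {W : ℝ} (hδ : ∀ i, 0 < δ i) (hL : 0 ≤ L)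
    (hf : DifferentiableOn ℂ f (polydiscNbhd δ)) (hfL : ∀ z ∈ polydiscNbhd δ, ‖f z‖ ≤ L)
    (hf0 : ∀ y ∈ cube d, 0 ≤ reOnReals f y)
    (hSmap : MapsTo S (cube d) (cube d)) (hB0 : 0 ≤ B)
    (hSB : ∀ j i, ∀ x ∈ cube d, |pd d (fun y => S y j) i x| ≤ B)
    (hTmap : MapsTo T (cube d) (cube d))
    (hTmono : ∀ j, ∀ x ∈ cube d, MonotoneOn (fun t => T (update x j t) j) (Icc (-1) 1))
    (hTreg : ContDiffOn ℝ 1 T (cube d)) (hW : W1dist d S T ≤ W) (hx : x ∈ cube d) :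
    0 ≤ pullbackDensity f T x ∧ pullbackDensity f T x ≤ L * (B + W) ^ d ∧
      |pullbackDensity f T x - pullbackDensity f S x| ≤
        (L * d * (B + W) ^ (d - 1) + (∑ i, 2 * L / δ i) * (B + W) ^ d) * W1dist d S T := by
  obtain ⟨B', -, hTB'⟩ := exists_abs_pd_le hTreg
  have hSB' : ‖diagPd d S x‖ ≤ B := norm_diagPd_le hB0 (fun j => hSB j j) hx
  have hdiag := norm_diagPd_sub_le_W1dist hSB hTB' hx
  have hTB : ‖diagPd d T x‖ ≤ B + W :=
    (norm_le_norm_add_norm_sub' _ _).trans (add_le_add hSB' (hdiag.trans hW))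
  have hSB'' : ‖diagPd d S x‖ ≤ B + W :=
    hSB'.trans (le_add_of_nonneg_right (W1dist_nonneg.trans hW))
  exact ⟨pullbackDensity_nonneg hf0 (hTmap hx) fun j => hTmono j x hx,
    pullbackDensity_le hδ hL hfL (hTmap hx) hTB,
    abs_pullbackDensity_sub_le hδ hL hf hfL (hSmap hx) (hTmap hx) hSB'' hTB
      (norm_sub_le_W1dist hSmap hTmap hx) hdiag⟩

end PullbackDensity

theorem exists_divergences_le_of_W1dist_le {d : ℕ} {δ : Fin d → ℝ} {M L : ℝ}
    {fρ fπ : (Fin d → ℂ) → ℂ} {S : (Fin d → ℝ) → Fin d → ℝ}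
    {St : ℝ → (Fin d → ℝ) → Fin d → ℝ} {E : ℝ → ℝ} {C' : ℝ}
    (hδ : ∀ i, 0 < δ i) (hM : 0 < M) (hL : 0 ≤ L)
    (hρ : DifferentiableOn ℂ fρ (polydiscNbhd δ)) (hρL : ∀ z ∈ polydiscNbhd δ, ‖fρ z‖ ≤ L)
    (hρ0 : ∀ x ∈ cube d, 0 ≤ reOnReals fρ x) (hπM : ∀ x ∈ cube d, M ≤ reOnReals fπ x)
    (hSmap : MapsTo S (cube d) (cube d)) (hSreg : ContDiffOn ℝ 1 S (cube d))
    (hStrans : ∀ x ∈ cube d, pullbackDensity fρ S x = reOnReals fπ x)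
    (hStmap : ∀ ε > 0, MapsTo (St ε) (cube d) (cube d))
    (hStmono : ∀ ε > 0, ∀ j, ∀ x ∈ cube d,
      MonotoneOn (fun t => St ε (update x j t) j) (Icc (-1) 1))
    (hStreg : ∀ ε > 0, ContDiffOn ℝ 1 (St ε) (cube d))
    (hC' : 0 ≤ C') (hE : ∀ ε > 0, E ε ∈ Icc 0 1)
    (hw : ∀ ε > 0, W1dist d S (St ε) ≤ C' * E ε) :
    ∃ C, 0 < C ∧ ∀ ε > 0,
      hellingerDist (muD d) (pullbackDensity fρ (St ε)) (reOnReals fπ) ≤ C * E ε ∧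
      tvDist (muD d) (pullbackDensity fρ (St ε)) (reOnReals fπ) ≤ C * E ε ∧
      klDivergence (muD d) (pullbackDensity fρ (St ε)) (reOnReals fπ) ≤ C * E ε := by
  obtain ⟨B, hB0, hSB⟩ := exists_abs_pd_le hSreg
  set G := L * (B + C') ^ d
  set K := L * d * (B + C') ^ (d - 1) + (∑ i, 2 * L / δ i) * (B + C') ^ d
  set c := max (max (√(2 * M))⁻¹ 2⁻¹) (G / M)
  have hK : 0 ≤ K := add_nonneg (by positivity) (mul_nonneg
    (Finset.sum_nonneg fun i _ => div_nonneg (by positivity) (hδ i).le) (by positivity))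
  refine ⟨c * (K * C') + 1, by positivity, fun ε hε => ?_⟩
  obtain ⟨hE0, hE1⟩ := hE ε hε
  have hwC' : W1dist d S (St ε) ≤ C' := (hw ε hε).trans (mul_le_of_le_one_right hC' hE1)
  have hη : 0 ≤ K * (C' * E ε) := mul_nonneg hK (mul_nonneg hC' hE0)
  have hpt : ∀ᵐ x ∂muD d, 0 ≤ pullbackDensity fρ (St ε) x ∧
      pullbackDensity fρ (St ε) x ≤ G ∧ M ≤ reOnReals fπ x ∧
      |pullbackDensity fρ (St ε) x - reOnReals fπ x| ≤ K * (C' * E ε) := by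
    filter_upwards [ae_mem_cube d] with x hx
    obtain ⟨hg0, hgG, hgp⟩ := pullbackDensity_bounds_of_W1dist_le hδ hL hρ hρL hρ0 hSmap hB0
      hSB (hStmap ε hε) (hStmono ε hε) (hStreg ε hε) hwC' hx
    rw [hStrans x hx] at hgp
    exact ⟨hg0, hgG, hπM x hx, hgp.trans (mul_le_mul_of_nonneg_left (hw ε hε) hK)⟩
  have hscale : ∀ a ≤ c, a * (K * (C' * E ε)) ≤ (c * (K * C') + 1) * E ε := fun a ha =>
    calc a * (K * (C' * E ε)) ≤ c * (K * (C' * E ε)) := mul_le_mul_of_nonneg_right ha hη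
      _ = c * (K * C') * E ε := by ring
      _ ≤ (c * (K * C') + 1) * E ε :=
        mul_le_mul_of_nonneg_right (le_add_of_nonneg_right zero_le_one) hE0
  exact ⟨(hellingerDist_le hM hη (hpt.mono fun x h => ⟨h.1, h.2.2⟩)).trans
      (hscale _ (le_max_of_le_left (le_max_left _ _))),
    (tvDist_le hη (hpt.mono fun x h => h.2.2.2)).trans
      (hscale _ (le_max_of_le_left (le_max_right _ _))),
    (klDivergence_le hM (by positivity) hη hpt).trans (hscale _ (le_max_right _ _))⟩

theorem stmt12_general (d : ℕ) (M L : ℝ) (hM : 0 < M) (hML : M ≤ L)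
    (δ : Fin d → ℝ) (hδ : ∀ j, 0 < δ j) (C₆ C₇ : ℝ) (hC₇ : 0 < C₇)
    (fρ fπ : (Fin d → ℂ) → ℂ)
    -- Assumption (A) for both densities
    (hA : ∀ f : (Fin d → ℂ) → ℂ, f = fρ ∨ f = fπ →
      (∀ x ∈ cube d,
        (f (fun i => ((x i : ℝ) : ℂ))).im = 0 ∧ 0 < (f (fun i => ((x i : ℝ) : ℂ))).re) ∧
      (∫ x : Fin d → ℝ, (f (fun i => ((x i : ℝ) : ℂ))).re ∂(muD d) = 1) ∧
      DifferentiableOn ℂ f {z | ∀ i : Fin d, z i ∈ cNbhd (δ i) segC} ∧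
      (∀ z : Fin d → ℂ, (∀ i : Fin d, z i ∈ cNbhd (δ i) segC) →
        M ≤ ‖f z‖ ∧ ‖f z‖ ≤ L) ∧
      (∀ x ∈ cube d, ∀ y : Fin d → ℂ, (∀ i : Fin d, ‖y i‖ < δ i) →
        ‖f (fun i => ((x i : ℝ) : ℂ) + y i) - f (fun i => ((x i : ℝ) : ℂ))‖
          ≤ C₆) ∧
      (∀ m : Fin d, ∀ x ∈ cube d, ∀ y : Fin d → ℂ,
        (∀ i : Fin d, i < m → ‖y i‖ < δ i) →
        (∀ i : Fin d, ¬i < m → y i = 0) →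
        ‖f (fun i => ((x i : ℝ) : ℂ) + y i) - f (fun i => ((x i : ℝ) : ℂ))‖
          ≤ C₆ * δ m))
    -- `S` is the (triangular, monotone, C¹) inverse transport: `S^♯ρ = π`
    (S : (Fin d → ℝ) → Fin d → ℝ)
    (hSmap : Set.MapsTo S (cube d) (cube d))
    (hSreg : ContDiffOn ℝ 1 S (cube d))
    (hStrans : ∀ x ∈ cube d,
      (fρ (fun i => ((S x i : ℝ) : ℂ))).re * detd d S x = (fπ (fun i => ((x i : ℝ) : ℂ))).re)
    -- the family `S̃_ε` of monotone triangular rational bijections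
    (St : ℝ → (Fin d → ℝ) → Fin d → ℝ)
    (hSt : ∀ ε : ℝ, 0 < ε →
      Set.MapsTo (St ε) (cube d) (cube d) ∧
      (∀ j : Fin d, ∀ x y : Fin d → ℝ, (∀ i ≤ j, x i = y i) → St ε x j = St ε y j) ∧
      (∀ j : Fin d, ∀ x ∈ cube d,
        StrictMonoOn (fun t => St ε (Function.update x j t) j) (Set.Icc (-1 : ℝ) 1) ∧
        Set.BijOn (fun t => St ε (Function.update x j t) j)
          (Set.Icc (-1 : ℝ) 1) (Set.Icc (-1 : ℝ) 1)) ∧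
      ContDiffOn ℝ 1 (St ε) (cube d))
    -- `‖S − S̃_ε‖_{W^{1,∞}} ≤ C' exp(−τ β N_ε^{1/d})`
    (happrox : ∀ τ : ℝ, 0 < τ → τ < 1 → ∃ C' : ℝ, 0 < C' ∧ ∀ ε : ℝ, 0 < ε →
      W1dist d S (St ε) ≤
        C' * Real.exp (-(τ *
          (((Nat.factorial (d - 1) : ℝ) *
              ∏ i : Fin d, Real.log (1 + C₇ * δ i)) ^ ((d : ℝ)⁻¹)) *
          ((∑ j : Fin d, (Lam d (fun i => 1 + C₇ * δ i) j ε).ncard : ℕ) : ℝ)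
            ^ ((d : ℝ)⁻¹)))) :
    ∀ τ : ℝ, 0 < τ → τ < 1 → ∃ C : ℝ, 0 < C ∧ ∀ ε : ℝ, 0 < ε →
      -- Hellinger distance
      (Real.sqrt (2⁻¹ * ∫ x,
          (Real.sqrt ((fρ (fun i => ((St ε x i : ℝ) : ℂ))).re * detd d (St ε) x) -
            Real.sqrt ((fπ (fun i => ((x i : ℝ) : ℂ))).re)) ^ 2 ∂(muD d)) ≤
        C * Real.exp (-(τ *
          (((Nat.factorial (d - 1) : ℝ) *
              ∏ i : Fin d, Real.log (1 + C₇ * δ i)) ^ ((d : ℝ)⁻¹)) *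
          ((∑ j : Fin d, (Lam d (fun i => 1 + C₇ * δ i) j ε).ncard : ℕ) : ℝ)
            ^ ((d : ℝ)⁻¹)))) ∧
      -- total variation distance
      (2⁻¹ * (∫ x,
          |(fρ (fun i => ((St ε x i : ℝ) : ℂ))).re * detd d (St ε) x -
            (fπ (fun i => ((x i : ℝ) : ℂ))).re| ∂(muD d)) ≤
        C * Real.exp (-(τ *
          (((Nat.factorial (d - 1) : ℝ) *
              ∏ i : Fin d, Real.log (1 + C₇ * δ i)) ^ ((d : ℝ)⁻¹)) *
          ((∑ j : Fin d, (Lam d (fun i => 1 + C₇ * δ i) j ε).ncard : ℕ) : ℝ)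
            ^ ((d : ℝ)⁻¹)))) ∧
      -- Kullback–Leibler divergence
      ((∫ x,
          (fρ (fun i => ((St ε x i : ℝ) : ℂ))).re * detd d (St ε) x *
            Real.log ((fρ (fun i => ((St ε x i : ℝ) : ℂ))).re * detd d (St ε) x /
              (fπ (fun i => ((x i : ℝ) : ℂ))).re) ∂(muD d)) ≤
        C * Real.exp (-(τ *
          (((Nat.factorial (d - 1) : ℝ) *
              ∏ i : Fin d, Real.log (1 + C₇ * δ i)) ^ ((d : ℝ)⁻¹)) *
          ((∑ j : Fin d, (Lam d (fun i => 1 + C₇ * δ i) j ε).ncard : ℕ) : ℝ)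
            ^ ((d : ℝ)⁻¹)))) := by
  intro τ hτ hτ1
  obtain ⟨C', hC', hw⟩ := happrox τ hτ hτ1
  obtain ⟨hρpos, -, hρdiff, hρbound, -, -⟩ := hA fρ (Or.inl rfl)
  obtain ⟨hπpos, -, -, hπbound, -, -⟩ := hA fπ (Or.inr rfl)
  have hπM : ∀ x ∈ cube d, M ≤ reOnReals fπ x := fun x hx => by
    rw [reOnReals, ← abs_of_pos (hπpos x hx).2, Complex.abs_re_eq_norm.2 (hπpos x hx).1]
    exact (hπbound _ (ofReal_mem_polydiscNbhd hδ hx)).1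
  refine exists_divergences_le_of_W1dist_le hδ hM (hM.le.trans hML) hρdiff
    (fun z hz => (hρbound z hz).2) (fun x hx => (hρpos x hx).2.le) hπM hSmap hSreg hStrans
    (fun ε hε => (hSt ε hε).1) (fun ε hε j x hx => ((hSt ε hε).2.2.1 j x hx).1.monotoneOn)
    (fun ε hε => (hSt ε hε).2.2.2) hC'.le (fun ε _ => ⟨(Real.exp_pos _).le, ?_⟩) hw
  refine Real.exp_le_one_iff.2 <| neg_nonpos.2 <| mul_nonneg (mul_nonneg hτ.le
    (Real.rpow_nonneg (mul_nonneg (Nat.cast_nonneg _) (Finset.prod_nonneg fun i _ => ?_)) _))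
    (Real.rpow_nonneg (Nat.cast_nonneg _) _)
  exact Real.log_nonneg (le_add_of_nonneg_right (mul_pos hC₇ (hδ i)).le)

/-- convergence of the pushforward measures.  In the setting of the
rational-approximation proposition (Assumption (A), `ξ_j = 1 + C₇δ_j`,
`β = ((d-1)!·∏_j log ξ_j)^{1/d}`, `N_ε = Σ_j |Λ_{j,ε}|`), if `S` is the inverse
Knothe–Rosenblatt transport (so `f_ρ(S(x))·det dS(x) = f_π(x)`) and `(S̃_ε)` are monotone
triangular `C¹` bijections with `‖S − S̃_ε‖_{W^{1,∞}} ≤ C' exp(−τβN_ε^{1/d})`, then the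
Hellinger and total-variation distances and the KL divergence of `S̃_ε^♯ρ` and `π` decay
at the same exponential rate. -/
theorem stmt12 (d : ℕ) (hd : 0 < d) (M L : ℝ) (hM : 0 < M) (hML : M ≤ L)
    (δ : Fin d → ℝ) (hδ : ∀ j, 0 < δ j) (C₆ C₇ : ℝ) (hC₆ : 0 < C₆) (hC₇ : 0 < C₇)
    (fρ fπ : (Fin d → ℂ) → ℂ)
    -- Assumption (A) for both densities
    (hA : ∀ f : (Fin d → ℂ) → ℂ, f = fρ ∨ f = fπ →
      (∀ x ∈ cube d,
        (f (fun i => ((x i : ℝ) : ℂ))).im = 0 ∧ 0 < (f (fun i => ((x i : ℝ) : ℂ))).re) ∧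
      (∫ x : Fin d → ℝ, (f (fun i => ((x i : ℝ) : ℂ))).re ∂(muD d) = 1) ∧
      DifferentiableOn ℂ f {z | ∀ i : Fin d, z i ∈ cNbhd (δ i) segC} ∧
      (∀ z : Fin d → ℂ, (∀ i : Fin d, z i ∈ cNbhd (δ i) segC) →
        M ≤ ‖f z‖ ∧ ‖f z‖ ≤ L) ∧
      (∀ x ∈ cube d, ∀ y : Fin d → ℂ, (∀ i : Fin d, ‖y i‖ < δ i) →
        ‖f (fun i => ((x i : ℝ) : ℂ) + y i) - f (fun i => ((x i : ℝ) : ℂ))‖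
          ≤ C₆) ∧
      (∀ m : Fin d, ∀ x ∈ cube d, ∀ y : Fin d → ℂ,
        (∀ i : Fin d, i < m → ‖y i‖ < δ i) →
        (∀ i : Fin d, ¬i < m → y i = 0) →
        ‖f (fun i => ((x i : ℝ) : ℂ) + y i) - f (fun i => ((x i : ℝ) : ℂ))‖
          ≤ C₆ * δ m))
    -- `S` is the (triangular, monotone, C¹) inverse transport: `S^♯ρ = π`
    (S : (Fin d → ℝ) → Fin d → ℝ)
    (hSmap : Set.MapsTo S (cube d) (cube d))
    (hStri : ∀ j : Fin d, ∀ x y : Fin d → ℝ, (∀ i ≤ j, x i = y i) → S x j = S y j)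
    (hSmono : ∀ j : Fin d, ∀ x ∈ cube d,
      StrictMonoOn (fun t => S (Function.update x j t) j) (Set.Icc (-1 : ℝ) 1) ∧
      Set.BijOn (fun t => S (Function.update x j t) j)
        (Set.Icc (-1 : ℝ) 1) (Set.Icc (-1 : ℝ) 1))
    (hSreg : ContDiffOn ℝ 1 S (cube d))
    (hStrans : ∀ x ∈ cube d,
      (fρ (fun i => ((S x i : ℝ) : ℂ))).re * detd d S x = (fπ (fun i => ((x i : ℝ) : ℂ))).re)
    -- the family `S̃_ε` of monotone triangular rational bijections
    (St : ℝ → (Fin d → ℝ) → Fin d → ℝ)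
    (hSt : ∀ ε : ℝ, 0 < ε →
      Set.MapsTo (St ε) (cube d) (cube d) ∧
      (∀ j : Fin d, ∀ x y : Fin d → ℝ, (∀ i ≤ j, x i = y i) → St ε x j = St ε y j) ∧
      (∀ j : Fin d, ∀ x ∈ cube d,
        StrictMonoOn (fun t => St ε (Function.update x j t) j) (Set.Icc (-1 : ℝ) 1) ∧
        Set.BijOn (fun t => St ε (Function.update x j t) j)
          (Set.Icc (-1 : ℝ) 1) (Set.Icc (-1 : ℝ) 1)) ∧
      ContDiffOn ℝ 1 (St ε) (cube d))
    -- `‖S − S̃_ε‖_{W^{1,∞}} ≤ C' exp(−τ β N_ε^{1/d})`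
    (happrox : ∀ τ : ℝ, 0 < τ → τ < 1 → ∃ C' : ℝ, 0 < C' ∧ ∀ ε : ℝ, 0 < ε →
      W1dist d S (St ε) ≤
        C' * Real.exp (-(τ *
          (((Nat.factorial (d - 1) : ℝ) *
              ∏ i : Fin d, Real.log (1 + C₇ * δ i)) ^ ((d : ℝ)⁻¹)) *
          ((∑ j : Fin d, (Lam d (fun i => 1 + C₇ * δ i) j ε).ncard : ℕ) : ℝ)
            ^ ((d : ℝ)⁻¹)))) :
    ∀ τ : ℝ, 0 < τ → τ < 1 → ∃ C : ℝ, 0 < C ∧ ∀ ε : ℝ, 0 < ε →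
      -- Hellinger distance
      (Real.sqrt (2⁻¹ * ∫ x,
          (Real.sqrt ((fρ (fun i => ((St ε x i : ℝ) : ℂ))).re * detd d (St ε) x) -
            Real.sqrt ((fπ (fun i => ((x i : ℝ) : ℂ))).re)) ^ 2 ∂(muD d)) ≤
        C * Real.exp (-(τ *
          (((Nat.factorial (d - 1) : ℝ) *
              ∏ i : Fin d, Real.log (1 + C₇ * δ i)) ^ ((d : ℝ)⁻¹)) *
          ((∑ j : Fin d, (Lam d (fun i => 1 + C₇ * δ i) j ε).ncard : ℕ) : ℝ)
            ^ ((d : ℝ)⁻¹)))) ∧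
      -- total variation distance
      (2⁻¹ * (∫ x,
          |(fρ (fun i => ((St ε x i : ℝ) : ℂ))).re * detd d (St ε) x -
            (fπ (fun i => ((x i : ℝ) : ℂ))).re| ∂(muD d)) ≤
        C * Real.exp (-(τ *
          (((Nat.factorial (d - 1) : ℝ) *
              ∏ i : Fin d, Real.log (1 + C₇ * δ i)) ^ ((d : ℝ)⁻¹)) *
          ((∑ j : Fin d, (Lam d (fun i => 1 + C₇ * δ i) j ε).ncard : ℕ) : ℝ)
            ^ ((d : ℝ)⁻¹)))) ∧
      -- Kullback–Leibler divergence
      ((∫ x,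
          (fρ (fun i => ((St ε x i : ℝ) : ℂ))).re * detd d (St ε) x *
            Real.log ((fρ (fun i => ((St ε x i : ℝ) : ℂ))).re * detd d (St ε) x /
              (fπ (fun i => ((x i : ℝ) : ℂ))).re) ∂(muD d)) ≤
        C * Real.exp (-(τ *
          (((Nat.factorial (d - 1) : ℝ) *
              ∏ i : Fin d, Real.log (1 + C₇ * δ i)) ^ ((d : ℝ)⁻¹)) *
          ((∑ j : Fin d, (Lam d (fun i => 1 + C₇ * δ i) j ε).ncard : ℕ) : ℝ)
            ^ ((d : ℝ)⁻¹)))) :=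
  stmt12_general d M L hM hML δ hδ C₆ C₇ hC₇ fρ fπ hA S hSmap hSreg hStrans St hSt happrox
end

section
/- Let d ∈ ℕ, let b = (b_j)_{j=1}^d ⊂ (0,∞), set C₀ := max{1, max_{j≤d} b_j}, and let γ > 0. Then there exist a monotonically increasing sequence (κ_j)_{j=1}^d ⊂ (0,1) and τ > 0 (depending on γ, d and C₀ but otherwise independent of b) such that, with δ_j := κ_j + τ/b_j: Σ_{j=1}^k b_jδ_j ≤ γ δ_{k+1} for all k ∈ {1,…,d−1}, and Σ_{j=1}^d b_jδ_j ≤ γ. -/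
/-- For `d ∈ ℕ`, positive weights `(b_j)_{j=1}^d` bounded by
`C₀ := max{1, max_j b_j}` and `γ > 0`, there exist a monotonically increasing sequence
`(κ_j)_{j=1}^d ⊂ (0,1)` and `τ > 0`, depending only on `γ`, `d` and `C₀` (not otherwise
on `b`), such that with `δ_j := κ_j + τ/b_j` one has
`Σ_{j=1}^k b_jδ_j ≤ γ δ_{k+1}` for all `k ∈ {1,…,d−1}` and `Σ_{j=1}^d b_jδ_j ≤ γ`. -/
theorem stmt19 (d : ℕ) (γ C₀ : ℝ) (hγ : 0 < γ) (hC₀ : 1 ≤ C₀) :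
    ∃ (κ : ℕ → ℝ) (τ : ℝ),
      (∀ i j, 1 ≤ i → i ≤ j → j ≤ d → κ i ≤ κ j) ∧
      (∀ j, 1 ≤ j → j ≤ d → 0 < κ j ∧ κ j < 1) ∧
      0 < τ ∧
      ∀ b : ℕ → ℝ, (∀ j, 1 ≤ j → j ≤ d → 0 < b j ∧ b j ≤ C₀) →
        (∀ k, 1 ≤ k → k ≤ d - 1 →
          ∑ j ∈ Finset.Icc 1 k, b j * (κ j + τ / b j) ≤ γ * (κ (k + 1) + τ / b (k + 1))) ∧
        ∑ j ∈ Finset.Icc 1 d, b j * (κ j + τ / b j) ≤ γ := by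
  have hC1 : (0:ℝ) < C₀ + 1 := by linarith
  set M : ℝ := max 1 ((d:ℝ) * (C₀ + 1) / γ) with hMdef
  have hM1 : (1:ℝ) ≤ M := le_max_left _ _
  have hM0 : (0:ℝ) < M := lt_of_lt_of_le one_pos hM1
  have hmin : (0:ℝ) < min 1 γ := lt_min one_pos hγ
  have hden : (0:ℝ) < 2 * ((d:ℝ) + 1) * (C₀ + 1) * M ^ d := by positivity
  set ε : ℝ := min 1 γ / (2 * ((d:ℝ) + 1) * (C₀ + 1) * M ^ d) with hεdef
  have hε : 0 < ε := div_pos hmin hden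
  -- key identity
  have h2 : ε * M ^ d * (2 * ((d:ℝ) + 1) * (C₀ + 1)) = min 1 γ := by
    rw [hεdef]; field_simp
  have hx0 : 0 < ε * M ^ d := mul_pos hε (pow_pos hM0 _)
  refine ⟨fun j => ε * M ^ (j - 1), ε, ?_, ?_, hε, ?_⟩
  · intro i j _ hij _
    exact mul_le_mul_of_nonneg_left (pow_le_pow_right₀ hM1 (Nat.sub_le_sub_right hij 1)) hε.le
  · intro j _ hjd
    refine ⟨mul_pos hε (pow_pos hM0 _), ?_⟩
    have hle : ε * M ^ (j - 1) ≤ ε * M ^ d :=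
      mul_le_mul_of_nonneg_left (pow_le_pow_right₀ hM1 (le_trans (Nat.sub_le j 1) hjd)) hε.le
    have hm1 : min 1 γ ≤ 1 := min_le_left _ _
    have hd0 : (0:ℝ) ≤ (d:ℝ) := Nat.cast_nonneg d
    have key : ε * M ^ d < 1 := by
      nlinarith [mul_pos hx0 (show (0:ℝ) < 2 * ((d:ℝ) + 1) * (C₀ + 1) - 1 by nlinarith)]
    simp only []
    linarith
  · intro b hb
    -- generic sum bound
    have hsum : ∀ k, 1 ≤ k → k ≤ d →
        ∑ j ∈ Finset.Icc 1 k, b j * (ε * M ^ (j - 1) + ε / b j)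
          ≤ (d:ℝ) * ((C₀ + 1) * (ε * M ^ (k - 1))) := by
      intro k hk1 hkd
      have hbd : ∀ j ∈ Finset.Icc 1 k,
          b j * (ε * M ^ (j - 1) + ε / b j) ≤ (C₀ + 1) * (ε * M ^ (k - 1)) := by
        intro j hj
        simp only [Finset.mem_Icc] at hj
        obtain ⟨hbj, hbj'⟩ := hb j hj.1 (le_trans hj.2 hkd)
        have h1 : b j * (ε * M ^ (j - 1) + ε / b j) = b j * (ε * M ^ (j - 1)) + ε := by
          field_simp
        rw [h1]
        have hκ : ε * M ^ (j - 1) ≤ ε * M ^ (k - 1) :=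
          mul_le_mul_of_nonneg_left (pow_le_pow_right₀ hM1 (Nat.sub_le_sub_right hj.2 1)) hε.le
        have hκ0 : 0 < ε * M ^ (j - 1) := mul_pos hε (pow_pos hM0 _)
        have h1p : (1:ℝ) ≤ M ^ (k - 1) := by simpa using pow_le_pow_right₀ hM1 (Nat.zero_le (k - 1))
        nlinarith [mul_le_mul hbj' hκ hκ0.le (by linarith : (0:ℝ) ≤ C₀)]
      calc ∑ j ∈ Finset.Icc 1 k, b j * (ε * M ^ (j - 1) + ε / b j)
          ≤ (Finset.Icc 1 k).card • ((C₀ + 1) * (ε * M ^ (k - 1))) :=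
            Finset.sum_le_card_nsmul _ _ _ hbd
        _ = (k:ℝ) * ((C₀ + 1) * (ε * M ^ (k - 1))) := by
            rw [Nat.card_Icc, nsmul_eq_mul]; norm_num
        _ ≤ (d:ℝ) * ((C₀ + 1) * (ε * M ^ (k - 1))) := by
            have : (k:ℝ) ≤ (d:ℝ) := Nat.cast_le.mpr hkd
            have hpos : 0 < (C₀ + 1) * (ε * M ^ (k - 1)) :=
              mul_pos hC1 (mul_pos hε (pow_pos hM0 _))
            nlinarith
    constructor
    · intro k hk1 hkd
      have hk1d : k + 1 ≤ d := by omega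
      have hγM : (d:ℝ) * (C₀ + 1) ≤ γ * M := by
        have h := le_max_right (1:ℝ) ((d:ℝ) * (C₀ + 1) / γ)
        rw [div_le_iff₀ hγ] at h
        linarith
      obtain ⟨hb1, _⟩ := hb (k + 1) (by omega) hk1d
      have hdiv : 0 < ε / b (k + 1) := div_pos hε hb1
      have hκ0 : 0 < ε * M ^ (k - 1) := mul_pos hε (pow_pos hM0 _)
      have hpow : M * (ε * M ^ (k - 1)) = ε * M ^ ((k + 1) - 1) := by
        have hkk : (k + 1) - 1 = k - 1 + 1 := by omega
        rw [hkk, pow_succ]; ring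
      calc ∑ j ∈ Finset.Icc 1 k, b j * (ε * M ^ (j - 1) + ε / b j)
          ≤ (d:ℝ) * ((C₀ + 1) * (ε * M ^ (k - 1))) := hsum k hk1 (by omega)
        _ ≤ γ * M * (ε * M ^ (k - 1)) := by nlinarith
        _ = γ * (ε * M ^ ((k + 1) - 1)) := by rw [mul_assoc, hpow]
        _ ≤ γ * (ε * M ^ ((k + 1) - 1) + ε / b (k + 1)) := by nlinarith
    · rcases Nat.eq_zero_or_pos d with hd | hd
      · subst hd; simp; linarith
      · have hle : ε * M ^ (d - 1) ≤ ε * M ^ d :=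
          mul_le_mul_of_nonneg_left (pow_le_pow_right₀ hM1 (Nat.sub_le d 1)) hε.le
        have hm2 : min 1 γ ≤ γ := min_le_right _ _
        have hd0 : (0:ℝ) ≤ (d:ℝ) := Nat.cast_nonneg d
        calc ∑ j ∈ Finset.Icc 1 d, b j * (ε * M ^ (j - 1) + ε / b j)
            ≤ (d:ℝ) * ((C₀ + 1) * (ε * M ^ (d - 1))) := hsum d hd le_rfl
          _ ≤ γ := by
              nlinarith [mul_le_mul_of_nonneg_left hle
                  (by positivity : (0:ℝ) ≤ (d:ℝ) * (C₀ + 1)),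
                mul_nonneg (mul_nonneg (by linarith : (0:ℝ) ≤ (d:ℝ) + 2) hC1.le) hx0.le]
end
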